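/- arXiv:2110.02485 — 2 statements merged into one kernel-verified Lean document; each statement's English description precedes it below -/
import Mathlib

section
/- Let A ∈ R^{ℓ×m×n} and let Q ∈ R^{ℓ×r×n} be partially orthogonal, Q^T * Q = I_{r×r×n}. Set B̃ = Q^T * A. Then ‖A − Q*B̃‖_F² = ‖A‖_F² − ‖B̃‖_F². -/
open scoped BigOperators
open Finset

noncomputable section

/-- Circular convolution of tubes in ℝ^n. -/
def conv {n : ℕ} [NeZero n] (a b : ZMod n → ℝ) : ZMod n → ℝ :=
  fun i => ∑ j : ZMod n, a j * b (i - j)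

/-- Circular convolution of tubes in ℂ^n. -/
def convC {n : ℕ} [NeZero n] (a b : ZMod n → ℂ) : ZMod n → ℂ :=
  fun i => ∑ j : ZMod n, a j * b (i - j)

/-- Unnormalized discrete Fourier transform with ω = exp(-2πi/n). -/
def dft {n : ℕ} [NeZero n] (a : ZMod n → ℂ) : ZMod n → ℂ :=
  fun k => ∑ j : ZMod n,
    a j * Complex.exp (-(2 * (Real.pi : ℂ) * Complex.I * (j.val : ℂ) * (k.val : ℂ)) / (n : ℂ))

/-- The t-product of third order tensors. -/
def tmul {n ℓ p m : ℕ} [NeZero n] (A : Fin ℓ → Fin p → ZMod n → ℝ)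
    (B : Fin p → Fin m → ZMod n → ℝ) : Fin ℓ → Fin m → ZMod n → ℝ :=
  fun i j t => ∑ k : Fin p, conv (A i k) (B k j) t

/-- Tensor transpose: transpose each frontal slice and reverse the order of slices 2..n. -/
def tT {n ℓ m : ℕ} (A : Fin ℓ → Fin m → ZMod n → ℝ) : Fin m → Fin ℓ → ZMod n → ℝ :=
  fun j i k => A i j (-k)

/-- Identity tensor: first frontal slice is the identity matrix, others are zero. -/
def tId (n m : ℕ) : Fin m → Fin m → ZMod n → ℝ :=
  fun i j k => if i = j ∧ k = 0 then 1 else 0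

/-- Frobenius norm of a real third order tensor. -/
def frob {n ℓ m : ℕ} [NeZero n] (A : Fin ℓ → Fin m → ZMod n → ℝ) : ℝ :=
  Real.sqrt (∑ i : Fin ℓ, ∑ j : Fin m, ∑ k : ZMod n, (A i j k) ^ 2)

/-- Frobenius norm of a complex third order tensor. -/
def frobC {n ℓ m : ℕ} [NeZero n] (A : Fin ℓ → Fin m → ZMod n → ℂ) : ℝ :=
  Real.sqrt (∑ i : Fin ℓ, ∑ j : Fin m, ∑ k : ZMod n, ‖A i j k‖ ^ 2)

/-- The k-th frontal slice of the mode-3 DFT of a real third order tensor. -/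
def hatSlice {n ℓ m : ℕ} [NeZero n] (A : Fin ℓ → Fin m → ZMod n → ℝ) (k : ZMod n) :
    Matrix (Fin ℓ) (Fin m) ℂ :=
  Matrix.of fun i j => dft (fun t => (A i j t : ℂ)) k

/-- Tubal rank: the maximum of the ranks of the frontal slices of the mode-3 DFT. -/
def trank {n ℓ m : ℕ} [NeZero n] (A : Fin ℓ → Fin m → ZMod n → ℝ) : ℕ :=
  Finset.univ.sup fun k : ZMod n => (hatSlice A k).rank

end

/-!
Equip tensors with the entrywise (Frobenius) inner product `⟪X, Y⟫`, so that `‖X‖_F² = ⟪X, X⟫`.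
The tensor transpose is the adjoint of the t-product: `⟪Q * B, X⟫ = ⟪B, Qᵀ * X⟫`, because reversing
a tube is the adjoint of circular convolution. With `B = Qᵀ * A` and `Qᵀ * Q = I` this gives
`⟪Q * B, A⟫ = ⟪B, B⟫` and `⟪Q * B, Q * B⟫ = ⟪B, Qᵀ * Q * B⟫ = ⟪B, B⟫`, and expanding
`‖A - Q * B‖_F²` yields `‖A‖_F² - 2‖B‖_F² + ‖B‖_F²`.
-/

open Finset

section TProduct

variable {n l m p q r : ℕ} [NeZero n]

theorem conv_assoc (a b c : ZMod n → ℝ) : conv a (conv b c) = conv (conv a b) c := by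
  funext i
  simp only [conv, mul_sum, sum_mul]
  conv_rhs => rw [sum_comm]
  refine sum_congr rfl fun x _ => Fintype.sum_equiv (Equiv.addRight x) _ _ fun k => ?_
  simp only [Equiv.coe_addRight, add_sub_cancel_right, sub_add_eq_sub_sub_swap, mul_assoc]

theorem conv_sum_right {ι : Type*} [Fintype ι] (a : ZMod n → ℝ) (f : ι → ZMod n → ℝ) :
    conv a (∑ x, f x) = ∑ x, conv a (f x) := by
  funext t
  simp only [conv, Finset.sum_apply, mul_sum]
  exact sum_comm

theorem conv_sum_left {ι : Type*} [Fintype ι] (f : ι → ZMod n → ℝ) (a : ZMod n → ℝ) :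
    conv (∑ x, f x) a = ∑ x, conv (f x) a := by
  funext t
  simp only [conv, Finset.sum_apply, sum_mul]
  exact sum_comm

theorem sum_conv_mul (a b x : ZMod n → ℝ) :
    ∑ t, conv a b t * x t = ∑ t, b t * conv (fun s => a (-s)) x t := by
  simp only [conv, sum_mul, mul_sum]
  refine sum_comm.trans (Eq.trans ?_ sum_comm)
  refine Fintype.sum_equiv (Equiv.neg (ZMod n)) _ _ fun s => ?_
  refine Fintype.sum_equiv (Equiv.subRight s) _ _ fun t => ?_
  simp only [Equiv.neg_apply, Equiv.subRight_apply, neg_neg, sub_neg_eq_add, sub_add_cancel]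
  ring

theorem tmul_apply (A : Fin l → Fin p → ZMod n → ℝ) (B : Fin p → Fin m → ZMod n → ℝ)
    (i : Fin l) (j : Fin m) : tmul A B i j = ∑ k, conv (A i k) (B k j) := by
  funext t
  simp only [tmul, Finset.sum_apply]

theorem tmul_assoc (A : Fin l → Fin p → ZMod n → ℝ) (B : Fin p → Fin q → ZMod n → ℝ)
    (C : Fin q → Fin m → ZMod n → ℝ) : tmul A (tmul B C) = tmul (tmul A B) C := by
  funext i j
  simp only [tmul_apply, conv_sum_right, conv_sum_left, conv_assoc]
  exact sum_comm

theorem tId_tmul (B : Fin r → Fin m → ZMod n → ℝ) : tmul (tId n r) B = B := by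
  funext i j t
  simp only [tmul, conv, tId]
  rw [sum_eq_single i (fun k _ hk => by simp [Ne.symm hk]) (by simp),
    sum_eq_single 0 (fun s _ hs => by simp [hs]) (by simp)]
  simp

def tinner (X Y : Fin l → Fin m → ZMod n → ℝ) : ℝ :=
  ∑ i, ∑ j, ∑ k, X i j k * Y i j k

theorem tinner_sub_sub (X Y : Fin l → Fin m → ZMod n → ℝ) :
    tinner (X - Y) (X - Y) = tinner X X - 2 * tinner Y X + tinner Y Y := by
  have expand (a b : ℝ) : (a - b) * (a - b) = a * a - 2 * (b * a) + b * b := by ring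
  simp only [tinner, Pi.sub_apply, expand, sum_add_distrib, sum_sub_distrib, mul_sum]

theorem frob_sq (X : Fin l → Fin m → ZMod n → ℝ) : frob X ^ 2 = tinner X X := by
  rw [frob, Real.sq_sqrt (by positivity)]
  simp only [tinner, sq]

theorem tinner_tmul_left (Q : Fin l → Fin r → ZMod n → ℝ)
    (B : Fin r → Fin m → ZMod n → ℝ) (X : Fin l → Fin m → ZMod n → ℝ) :
    tinner (tmul Q B) X = tinner B (tmul (tT Q) X) := by
  calc tinner (tmul Q B) X
      = ∑ i, ∑ j, ∑ a, ∑ t, B a j t * conv (tT Q a i) (X i j) t := by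
        refine sum_congr rfl fun i _ => sum_congr rfl fun j _ => ?_
        simp only [tmul, sum_mul]
        rw [sum_comm]
        exact sum_congr rfl fun a _ => sum_conv_mul _ _ _
    _ = ∑ a, ∑ j, ∑ i, ∑ t, B a j t * conv (tT Q a i) (X i j) t :=
        sum_comm.trans ((sum_congr rfl fun _ _ => sum_comm).trans sum_comm)
    _ = tinner B (tmul (tT Q) X) := by
        simp only [tinner, tmul, mul_sum]
        exact sum_congr rfl fun a _ => sum_congr rfl fun j _ => sum_comm

end TProduct

/-- Error identity for the projection onto the range of a partially orthogonal tensor: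
‖A − Q*B̃‖_F² = ‖A‖_F² − ‖B̃‖_F² where B̃ = Q^T * A. -/
theorem frob_sub_proj_sq {n l m r : ℕ} [NeZero n]
    (A : Fin l → Fin m → ZMod n → ℝ) (Q : Fin l → Fin r → ZMod n → ℝ)
    (hQ : tmul (tT Q) Q = tId n r) :
    frob (fun i j k => A i j k - tmul Q (tmul (tT Q) A) i j k) ^ 2
      = frob A ^ 2 - frob (tmul (tT Q) A) ^ 2 := by
  set B := tmul (tT Q) A
  have hproj : tmul (tT Q) (tmul Q B) = B := by rw [tmul_assoc, hQ, tId_tmul]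
  have hcross : tinner (tmul Q B) A = tinner B B := tinner_tmul_left Q B A
  have hsq : tinner (tmul Q B) (tmul Q B) = tinner B B := by rw [tinner_tmul_left, hproj]
  change frob (A - tmul Q B) ^ 2 = _
  rw [frob_sq, frob_sq, frob_sq, tinner_sub_sub, hcross, hsq]
  ring
end

section
/- (Eckart–Young for the t-product, optimality) With the notation above, A_k minimizes ‖A − Ã‖_F over all Ã of the form Ã = X * Y with X ∈ R^{ℓ×k×n}, Y ∈ R^{k×m×n}; i.e., ‖A − A_k‖_F ≤ ‖A − X*Y‖_F for all such X, Y. -/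
open scoped BigOperators
open Finset

/-! In the Fourier domain along the third mode the t-product becomes the slicewise matrix
product and the tensor transpose the slicewise conjugate transpose. So the frontal slices of
`Û`, `V̂` are unitary, `Â = Û Ŝ V̂ᴴ` is an SVD of each slice, and `X * Y` has slices of rank at
most `k`. By Parseval, `n ‖T‖_F² = ∑ᵢ ‖T̂⁽ⁱ⁾‖_F²`, so it suffices to prove the matrix
Eckart–Young inequality slice by slice.

For a rectangular diagonal `D` with nonincreasing nonnegative diagonal `s` and `rank N ≤ k`,
take an orthonormal family `q₁, …, q_d` in `ker N`, `d ≥ m - k`. Bessel's inequality on the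
rows of `D - N` gives `‖D - N‖² ≥ ∑_t ‖D q_t‖² = ∑_b s_b² p_b` with weights
`p_b = ∑_t |q_t b|²`, which lie in `[0, 1]` (Bessel again) and sum to `d`. As `s` is
nonincreasing, such a weighted sum is at least `∑_{b ≥ k} s_b² = ‖D - D_k‖²`. -/
open Finset
open scoped Matrix ZMod ComplexConjugate Matrix.Norms.Frobenius

section Fourier

variable {n : ℕ} [NeZero n]

theorem dft_eq_zmod_dft (a : ZMod n → ℂ) : dft a = 𝓕 a := by
  ext k
  refine sum_congr rfl fun j _ => ?_
  have hjk : -(j * k) = ((-(j.val * k.val : ℤ) : ℤ) : ZMod n) := by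
    push_cast
    simp only [ZMod.natCast_zmod_val]
  rw [smul_eq_mul, mul_comm, hjk, ZMod.stdAddChar_coe]
  congr 2
  push_cast
  ring

theorem dft_convC (a b : ZMod n → ℂ) (k : ZMod n) :
    dft (convC a b) k = dft a k * dft b k := by
  simp only [dft_eq_zmod_dft, ZMod.dft_apply, convC, smul_eq_mul, mul_sum, sum_mul]
  rw [sum_comm]
  conv_rhs => rw [sum_comm]
  refine sum_congr rfl fun j _ => ?_
  rw [← Equiv.sum_comp (Equiv.addRight j)]
  refine sum_congr rfl fun s _ => ?_
  simp only [Equiv.coe_addRight, add_sub_cancel_right, add_mul, neg_add, AddChar.map_add_eq_mul]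
  ring

theorem dft_conj_comp_neg (a : ZMod n → ℂ) (k : ZMod n) :
    dft (fun t => conj (a (-t))) k = conj (dft a k) := by
  simp only [dft_eq_zmod_dft, ZMod.dft_apply, smul_eq_mul, map_sum, map_mul]
  rw [← Equiv.sum_comp (Equiv.neg (ZMod n))]
  refine sum_congr rfl fun j _ => ?_
  rw [ZMod.stdAddChar_apply, ZMod.stdAddChar_apply, ← Circle.coe_inv_eq_conj,
    ← AddChar.map_neg_eq_inv]
  simp

theorem sum_dft (a : ZMod n → ℂ) : ∑ k, dft a k = n * a 0 := by
  have h := congrFun (ZMod.dft_dft a) 0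
  rw [ZMod.dft_apply_zero, neg_zero, smul_eq_mul] at h
  simpa only [dft_eq_zmod_dft] using h

/-- Parseval, from the convolution theorem: `∑ₖ |â k|²` is `n` times the value at `0` of the
autocorrelation of `a`. -/
theorem sum_norm_sq_dft (a : ZMod n → ℂ) : ∑ k, ‖dft a k‖ ^ 2 = n * ∑ t, ‖a t‖ ^ 2 := by
  have h : ∑ k, dft a k * conj (dft a k) = n * ∑ t, a t * conj (a t) := by
    simp only [← dft_conj_comp_neg, ← dft_convC, sum_dft, convC, zero_sub, neg_neg]
  simp only [Complex.mul_conj, Complex.normSq_eq_norm_sq] at h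
  exact_mod_cast h

end Fourier

theorem sum_ite_le_sum_mul_of_antitone {m k : ℕ} {g : ℕ → ℝ} (hg : Antitone g)
    (hg0 : ∀ v, 0 ≤ g v) {p : Fin m → ℝ} (hp0 : ∀ b, 0 ≤ p b) (hp1 : ∀ b, p b ≤ 1)
    (hp : ((m - k : ℕ) : ℝ) ≤ ∑ b, p b) :
    ∑ b : Fin m, (if k ≤ (b : ℕ) then g b else 0) ≤ ∑ b : Fin m, g b * p b := by
  let e (b : Fin m) : ℝ := if k ≤ (b : ℕ) then 1 else 0
  -- `g k` separates the values of `g` on the two sides of `k`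
  have hterm (b : Fin m) : (e b - p b) * (g b - g k) ≤ 0 := by
    by_cases hb : k ≤ (b : ℕ)
    · simp only [e, if_pos hb]
      exact mul_nonpos_of_nonneg_of_nonpos (by linarith [hp1 b]) (by linarith [hg hb])
    · simp only [e, if_neg hb]
      exact mul_nonpos_of_nonpos_of_nonneg (by linarith [hp0 b])
        (by linarith [hg (le_of_not_ge hb)])
  have hcard : ∑ b, e b = ((m - k : ℕ) : ℝ) := by
    have hIco : (range m).filter (k ≤ ·) = Ico k m := by
      ext v
      simp only [mem_filter, mem_range, mem_Ico]
      omega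
    rw [Fin.sum_univ_eq_sum_range (fun v => if k ≤ v then (1 : ℝ) else 0), sum_boole, hIco,
      Nat.card_Ico]
  have hsplit : ∑ b : Fin m, (if k ≤ (b : ℕ) then g b else 0) - ∑ b : Fin m, g b * p b
      = ∑ b, (e b - p b) * (g b - g k) + g k * (∑ b, e b - ∑ b, p b) := by
    rw [← sum_sub_distrib, ← sum_sub_distrib, mul_sum, ← sum_add_distrib]
    refine sum_congr rfl fun b _ => ?_
    by_cases hb : k ≤ (b : ℕ) <;> simp only [e, hb, if_true, if_false] <;> ring
  have hlast : g k * (∑ b, e b - ∑ b, p b) ≤ 0 :=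
    mul_nonpos_of_nonneg_of_nonpos (hg0 k) (by linarith)
  linarith [sum_nonpos fun b (_ : b ∈ univ) => hterm b]

theorem Fin.sum_ite_val_eq {l : ℕ} {M : Type*} [AddCommMonoid M] (c : ℕ) (f : ℕ → M) :
    ∑ a : Fin l, (if (a : ℕ) = c then f a else 0) = if c < l then f c else 0 := by
  rw [Fin.sum_univ_eq_sum_range (fun x => if x = c then f x else 0), sum_ite_eq']
  simp only [mem_range]

section Orthonormal

variable {m ι : Type*} [Fintype m] [Fintype ι] {q : ι → EuclideanSpace ℂ m}

theorem Orthonormal.sum_norm_sq_apply_le_one [DecidableEq m] (hq : Orthonormal ℂ q) (b : m) :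
    ∑ t, ‖q t b‖ ^ 2 ≤ 1 := by
  calc ∑ t, ‖q t b‖ ^ 2 = ∑ t, ‖inner ℂ (q t) (EuclideanSpace.single b (1 : ℂ))‖ ^ 2 := by
        refine sum_congr rfl fun t _ => ?_
        rw [norm_inner_symm, EuclideanSpace.inner_single_left, map_one, one_mul]
    _ ≤ ‖EuclideanSpace.single b (1 : ℂ)‖ ^ 2 := hq.sum_inner_products_le _
    _ = 1 := by simp

theorem Orthonormal.sum_sum_norm_sq_apply (hq : Orthonormal ℂ q) :
    ∑ b, ∑ t, ‖q t b‖ ^ 2 = Fintype.card ι := by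
  rw [sum_comm]
  simp [← EuclideanSpace.norm_sq_eq, hq.1]

end Orthonormal

namespace Matrix

section Frobenius

variable {l m ι : Type*} [Fintype l] [Fintype m]

theorem frobenius_norm_sq {α : Type*} [NormedAddCommGroup α] (A : Matrix l m α) :
    ‖A‖ ^ 2 = ∑ i, ∑ j, ‖A i j‖ ^ 2 := by
  rw [frobenius_norm_def, ← Real.sqrt_eq_rpow, Real.sq_sqrt (by positivity)]
  simp only [Real.rpow_two]

theorem ofReal_frobenius_norm_sq (A : Matrix l m ℂ) : ((‖A‖ ^ 2 : ℝ) : ℂ) = (Aᴴ * A).trace := by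
  rw [frobenius_norm_sq, sum_comm]
  push_cast
  simp [trace, mul_apply, Complex.conj_mul']

theorem frobenius_norm_unitary_mul [DecidableEq l] {U : Matrix l l ℂ}
    (hU : U ∈ unitaryGroup l ℂ) (A : Matrix l m ℂ) : ‖U * A‖ = ‖A‖ := by
  have hsq : ((‖U * A‖ ^ 2 : ℝ) : ℂ) = ((‖A‖ ^ 2 : ℝ) : ℂ) := by
    rw [ofReal_frobenius_norm_sq, ofReal_frobenius_norm_sq, conjTranspose_mul, Matrix.mul_assoc,
      ← Matrix.mul_assoc Uᴴ, ← star_eq_conjTranspose, Unitary.star_mul_self_of_mem hU,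
      Matrix.one_mul]
  exact (sq_eq_sq₀ (norm_nonneg _) (norm_nonneg _)).1 (by exact_mod_cast hsq)

theorem frobenius_norm_mul_unitary [DecidableEq m] {V : Matrix m m ℂ}
    (hV : V ∈ unitaryGroup m ℂ) (A : Matrix l m ℂ) : ‖A * V‖ = ‖A‖ := by
  rw [← frobenius_norm_conjTranspose, conjTranspose_mul,
    frobenius_norm_unitary_mul (U := Vᴴ) (Unitary.star_mem hV), frobenius_norm_conjTranspose]

/-- Bessel's inequality, applied to each row of `A`. -/
theorem sum_norm_sq_mulVec_le_frobenius_norm_sq [Fintype ι] (A : Matrix l m ℂ)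
    {q : ι → EuclideanSpace ℂ m} (hq : Orthonormal ℂ q) :
    ∑ t, ∑ a, ‖(A *ᵥ (q t).ofLp) a‖ ^ 2 ≤ ‖A‖ ^ 2 := by
  let row (a : l) : EuclideanSpace ℂ m := WithLp.toLp 2 (star (A a))
  have hrow (a : l) (t : ι) : (A *ᵥ (q t).ofLp) a = inner ℂ (row a) (q t) := by
    simp [row, EuclideanSpace.inner_eq_star_dotProduct, mulVec, dotProduct_comm]
  rw [frobenius_norm_sq, sum_comm]
  refine sum_le_sum fun a _ => ?_
  calc ∑ t, ‖(A *ᵥ (q t).ofLp) a‖ ^ 2 = ∑ t, ‖inner ℂ (q t) (row a)‖ ^ 2 := by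
        simp only [hrow, norm_inner_symm]
    _ ≤ ‖row a‖ ^ 2 := hq.sum_inner_products_le _
    _ = ∑ b, ‖A a b‖ ^ 2 := by simp [row, EuclideanSpace.norm_sq_eq]

end Frobenius

theorem exists_orthonormal_mulVec_eq_zero {l m : Type*} [Fintype m] (A : Matrix l m ℂ) :
    ∃ (d : ℕ) (q : Fin d → EuclideanSpace ℂ m), Orthonormal ℂ q ∧
      (∀ t, A *ᵥ (q t).ofLp = 0) ∧ A.rank + d = Fintype.card m := by
  let f := A.mulVecLin ∘ₗ (WithLp.linearEquiv 2 ℂ (m → ℂ)).toLinearMap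
  let b := stdOrthonormalBasis ℂ (LinearMap.ker f)
  refine ⟨_, fun t => b t, b.orthonormal.comp_linearIsometry (LinearMap.ker f).subtypeₗᵢ,
    fun t => (b t).2, ?_⟩
  have hrange : LinearMap.range f = LinearMap.range A.mulVecLin :=
    LinearMap.range_comp_of_range_eq_top _ (LinearEquiv.range _)
  rw [Matrix.rank, ← hrange, LinearMap.finrank_range_add_finrank_ker, finrank_euclideanSpace]

section RectDiag

variable {l m : ℕ}

def rectDiag (l m : ℕ) (s : ℕ → ℝ) : Matrix (Fin l) (Fin m) ℂ :=
  of fun a b => if (a : ℕ) = b then (s a : ℂ) else 0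

theorem frobenius_norm_sq_rectDiag (s : ℕ → ℝ) :
    ‖rectDiag l m s‖ ^ 2 = ∑ b : Fin m, if (b : ℕ) < l then s b ^ 2 else 0 := by
  rw [frobenius_norm_sq, sum_comm]
  refine sum_congr rfl fun b _ => ?_
  rw [← Fin.sum_ite_val_eq (f := fun x => s x ^ 2)]
  refine sum_congr rfl fun a _ => ?_
  by_cases hab : (a : ℕ) = b <;> simp [rectDiag, hab]

theorem sum_norm_sq_rectDiag_mulVec (s : ℕ → ℝ) (v : Fin m → ℂ) :
    ∑ a, ‖(rectDiag l m s *ᵥ v) a‖ ^ 2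
      = ∑ b : Fin m, (if (b : ℕ) < l then s b ^ 2 else 0) * ‖v b‖ ^ 2 := by
  have hrow (a : Fin l) : ‖(rectDiag l m s *ᵥ v) a‖ ^ 2
      = ∑ b : Fin m, if (a : ℕ) = b then s a ^ 2 * ‖v b‖ ^ 2 else 0 := by
    by_cases ha : (a : ℕ) < m
    · have hsingle (b : Fin m) : (a : ℕ) = b ↔ b = ⟨a, ha⟩ := by rw [Fin.ext_iff, eq_comm]
      simp only [mulVec, dotProduct, rectDiag, of_apply, hsingle, ite_mul, zero_mul,
        sum_ite_eq', mem_univ, if_true, norm_mul, Complex.norm_real, Real.norm_eq_abs, mul_pow,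
        sq_abs]
    · have hne (b : Fin m) : (a : ℕ) ≠ b := fun h => ha (h ▸ b.isLt)
      simp [mulVec, dotProduct, rectDiag, hne]
  simp only [hrow]
  rw [sum_comm]
  refine sum_congr rfl fun b _ => ?_
  rw [Fin.sum_ite_val_eq (f := fun x => s x ^ 2 * ‖v b‖ ^ 2), ite_mul, zero_mul]

theorem frobenius_norm_rectDiag_tail_le {s : ℕ → ℝ} (hs0 : ∀ j, 0 ≤ s j) (hs : Antitone s)
    {k : ℕ} {N : Matrix (Fin l) (Fin m) ℂ} (hN : N.rank ≤ k) :
    ‖rectDiag l m (fun j => if k ≤ j then s j else 0)‖ ≤ ‖rectDiag l m s - N‖ := by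
  obtain ⟨d, q, hq, hNq, hrank⟩ := exists_orthonormal_mulVec_eq_zero N
  let g (j : ℕ) : ℝ := if j < l then s j ^ 2 else 0
  have hg0 (j : ℕ) : 0 ≤ g j := by positivity
  have hg : Antitone g := fun i j hij => by
    by_cases hj : j < l
    · simp only [g, if_pos hj, if_pos (hij.trans_lt hj)]
      exact pow_le_pow_left₀ (hs0 j) (hs hij) 2
    · simp only [g, if_neg hj]
      exact hg0 i
  have hweights : ((m - k : ℕ) : ℝ) ≤ ∑ b : Fin m, ∑ t, ‖q t b‖ ^ 2 := by
    rw [Fintype.card_fin] at hrank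
    rw [hq.sum_sum_norm_sq_apply, Fintype.card_fin]
    exact_mod_cast (by omega : m - k ≤ d)
  rw [← sq_le_sq₀ (norm_nonneg _) (norm_nonneg _)]
  calc ‖rectDiag l m (fun j => if k ≤ j then s j else 0)‖ ^ 2
      = ∑ b : Fin m, (if k ≤ (b : ℕ) then g b else 0) := by
        rw [frobenius_norm_sq_rectDiag]
        refine sum_congr rfl fun b _ => ?_
        by_cases hk : k ≤ (b : ℕ) <;> simp [g, hk]
    _ ≤ ∑ b : Fin m, g b * ∑ t, ‖q t b‖ ^ 2 :=
        sum_ite_le_sum_mul_of_antitone hg hg0 (fun b => by positivity)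
          hq.sum_norm_sq_apply_le_one hweights
    _ = ∑ t, ∑ a, ‖((rectDiag l m s - N) *ᵥ (q t).ofLp) a‖ ^ 2 := by
        simp only [sub_mulVec, hNq, sub_zero, sum_norm_sq_rectDiag_mulVec, mul_sum]
        exact sum_comm
    _ ≤ ‖rectDiag l m s - N‖ ^ 2 := sum_norm_sq_mulVec_le_frobenius_norm_sq _ hq

theorem frobenius_norm_sub_truncate_le {s : ℕ → ℝ} (hs0 : ∀ j, 0 ≤ s j) (hs : Antitone s)
    {U : Matrix (Fin l) (Fin l) ℂ} (hU : U ∈ unitaryGroup (Fin l) ℂ)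
    {V : Matrix (Fin m) (Fin m) ℂ} (hV : V ∈ unitaryGroup (Fin m) ℂ)
    {k : ℕ} {N : Matrix (Fin l) (Fin m) ℂ} (hN : N.rank ≤ k) :
    ‖U * rectDiag l m s * Vᴴ - U * rectDiag l m (fun j => if j < k then s j else 0) * Vᴴ‖
      ≤ ‖U * rectDiag l m s * Vᴴ - N‖ := by
  have htail : rectDiag l m s - rectDiag l m (fun j => if j < k then s j else 0)
      = rectDiag l m (fun j => if k ≤ j then s j else 0) := by
    ext a b
    simp only [rectDiag, sub_apply, of_apply]
    split_ifs <;> first | omega | simp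
  have hcompetitor : U * rectDiag l m s * Vᴴ - N = U * (rectDiag l m s - Uᴴ * N * V) * Vᴴ := by
    have hUU : U * Uᴴ = 1 := Unitary.mul_star_self_of_mem hU
    have hVV : V * Vᴴ = 1 := Unitary.mul_star_self_of_mem hV
    calc U * rectDiag l m s * Vᴴ - N = U * rectDiag l m s * Vᴴ - (U * Uᴴ) * N * (V * Vᴴ) := by
          rw [hUU, hVV, Matrix.one_mul, Matrix.mul_one]
      _ = U * (rectDiag l m s - Uᴴ * N * V) * Vᴴ := by
          simp only [Matrix.mul_sub, Matrix.sub_mul, Matrix.mul_assoc]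
  have hrank : (Uᴴ * N * V).rank ≤ k :=
    ((rank_mul_le_left _ _).trans (rank_mul_le_right _ _)).trans hN
  have hV' : Vᴴ ∈ unitaryGroup (Fin m) ℂ := Unitary.star_mem hV
  rw [← Matrix.sub_mul, ← Matrix.mul_sub, hcompetitor]
  simp only [frobenius_norm_mul_unitary hV', frobenius_norm_unitary_mul hU, htail]
  exact frobenius_norm_rectDiag_tail_le hs0 hs hrank

end RectDiag

end Matrix

section Slices

variable {n ℓ m p : ℕ} [NeZero n]

theorem hatSlice_apply (A : Fin ℓ → Fin m → ZMod n → ℝ) (f : ZMod n) (i : Fin ℓ) (j : Fin m) :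
    hatSlice A f i j = dft (fun t => (A i j t : ℂ)) f :=
  rfl

theorem hatSlice_sub (A B : Fin ℓ → Fin m → ZMod n → ℝ) (f : ZMod n) :
    hatSlice (fun i j t => A i j t - B i j t) f = hatSlice A f - hatSlice B f := by
  ext i j
  simp only [hatSlice_apply, Matrix.sub_apply, dft_eq_zmod_dft, Complex.ofReal_sub]
  exact congrFun (map_sub 𝓕 (fun t => (A i j t : ℂ)) fun t => (B i j t : ℂ)) f

theorem hatSlice_tmul (X : Fin ℓ → Fin p → ZMod n → ℝ) (Y : Fin p → Fin m → ZMod n → ℝ)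
    (f : ZMod n) : hatSlice (tmul X Y) f = hatSlice X f * hatSlice Y f := by
  ext i j
  have htube : (fun t => (tmul X Y i j t : ℂ))
      = ∑ c, convC (fun t => (X i c t : ℂ)) (fun t => (Y c j t : ℂ)) := by
    ext t
    simp [tmul, conv, convC]
  rw [hatSlice_apply, htube, Matrix.mul_apply, dft_eq_zmod_dft, map_sum, Finset.sum_apply]
  simp only [← dft_eq_zmod_dft, dft_convC, hatSlice_apply]

theorem hatSlice_tT (A : Fin ℓ → Fin m → ZMod n → ℝ) (f : ZMod n) :
    hatSlice (tT A) f = (hatSlice A f)ᴴ := by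
  ext j i
  simpa [hatSlice_apply, tT] using dft_conj_comp_neg (fun t => (A i j t : ℂ)) f

theorem hatSlice_tId (f : ZMod n) : hatSlice (tId n m) f = 1 := by
  ext i j
  rw [hatSlice_apply, dft_eq_zmod_dft, ZMod.dft_apply, Matrix.one_apply]
  split_ifs with hij <;> simp [tId, hij, apply_ite ((↑) : ℝ → ℂ), mul_ite]

theorem hatSlice_truncate (A : Fin ℓ → Fin m → ZMod n → ℝ) (k : ℕ) (f : ZMod n) :
    hatSlice (fun a b t => if (a : ℕ) < k then A a b t else 0) f
      = Matrix.of fun (a : Fin ℓ) (b : Fin m) => if (a : ℕ) < k then hatSlice A f a b else 0 := by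
  ext a b
  rw [hatSlice_apply, Matrix.of_apply]
  split_ifs
  · rfl
  · simp [dft]

theorem hatSlice_mem_unitaryGroup {U : Fin m → Fin m → ZMod n → ℝ} (hU : tmul (tT U) U = tId n m)
    (f : ZMod n) : hatSlice U f ∈ Matrix.unitaryGroup (Fin m) ℂ := by
  rw [Matrix.mem_unitaryGroup_iff', Matrix.star_eq_conjTranspose, ← hatSlice_tT, ← hatSlice_tmul,
    hU, hatSlice_tId]

theorem sum_frobenius_norm_sq_hatSlice (A : Fin ℓ → Fin m → ZMod n → ℝ) :
    ∑ f, ‖hatSlice A f‖ ^ 2 = n * ∑ i, ∑ j, ∑ t, A i j t ^ 2 := by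
  simp only [Matrix.frobenius_norm_sq, hatSlice_apply, mul_sum]
  rw [sum_comm]
  refine sum_congr rfl fun i _ => ?_
  rw [sum_comm]
  refine sum_congr rfl fun j _ => ?_
  simp [sum_norm_sq_dft, mul_sum]

theorem frob_le_frob_of_hatSlice_le {A B : Fin ℓ → Fin m → ZMod n → ℝ}
    (h : ∀ f, ‖hatSlice A f‖ ≤ ‖hatSlice B f‖) : frob A ≤ frob B := by
  have hsum : ∑ f, ‖hatSlice A f‖ ^ 2 ≤ ∑ f, ‖hatSlice B f‖ ^ 2 :=
    sum_le_sum fun f _ => pow_le_pow_left₀ (norm_nonneg _) (h f) 2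
  rw [sum_frobenius_norm_sq_hatSlice, sum_frobenius_norm_sq_hatSlice] at hsum
  exact Real.sqrt_le_sqrt (le_of_mul_le_mul_left hsum (by simp [Nat.pos_of_neZero]))

end Slices

theorem tsvd_truncation_optimal_general {l m n : ℕ} [NeZero n] (k : ℕ)
    (A : Fin l → Fin m → ZMod n → ℝ)
    (U : Fin l → Fin l → ZMod n → ℝ) (S : Fin l → Fin m → ZMod n → ℝ)
    (V : Fin m → Fin m → ZMod n → ℝ) (σ : ZMod n → ℕ → ℝ)
    (hA : A = tmul (tmul U S) (tT V))
    (hU1 : tmul (tT U) U = tId n l)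
    (hV1 : tmul (tT V) V = tId n m)
    (hS : ∀ (i : ZMod n) (a : Fin l) (b : Fin m),
      hatSlice S i a b = if (a : ℕ) = (b : ℕ) then (σ i (a : ℕ) : ℂ) else 0)
    (hσnonneg : ∀ i j, 0 ≤ σ i j)
    (hσmono : ∀ i, ∀ j j' : ℕ, j ≤ j' → σ i j' ≤ σ i j) :
    ∀ (X : Fin l → Fin k → ZMod n → ℝ) (Y : Fin k → Fin m → ZMod n → ℝ),
      frob (fun i j t => A i j t -
          tmul (tmul U (fun a b t => if (a : ℕ) < k then S a b t else 0)) (tT V) i j t)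
        ≤ frob (fun i j t => A i j t - tmul X Y i j t) := by
  intro X Y
  refine frob_le_frob_of_hatSlice_le fun f => ?_
  have hŜ : hatSlice S f = Matrix.rectDiag l m (σ f) := Matrix.ext (hS f)
  have hŜk : hatSlice (fun a b t => if (a : ℕ) < k then S a b t else 0) f
      = Matrix.rectDiag l m (fun j => if j < k then σ f j else 0) := by
    ext a b
    simp only [hatSlice_truncate, hŜ, Matrix.rectDiag, Matrix.of_apply]
    split_ifs <;> simp_all
  have hXY : (hatSlice X f * hatSlice Y f).rank ≤ k :=
    (Matrix.rank_mul_le_left _ _).trans (Matrix.rank_le_width _)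
  rw [hatSlice_sub, hatSlice_sub, hA]
  simp only [hatSlice_tmul, hatSlice_tT, hŜ, hŜk]
  exact Matrix.frobenius_norm_sub_truncate_le (hσnonneg f) (hσmono f)
    (hatSlice_mem_unitaryGroup hU1 f) (hatSlice_mem_unitaryGroup hV1 f) hXY

/-- Eckart–Young optimality for the truncated tSVD: A_k is a best tubal rank-k
approximation among all products X*Y with X ∈ ℝ^{ℓ×k×n}, Y ∈ ℝ^{k×m×n}. -/
theorem tsvd_truncation_optimal {l m n : ℕ} [NeZero n] (k : ℕ)
    (A : Fin l → Fin m → ZMod n → ℝ)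
    (U : Fin l → Fin l → ZMod n → ℝ) (S : Fin l → Fin m → ZMod n → ℝ)
    (V : Fin m → Fin m → ZMod n → ℝ) (σ : ZMod n → ℕ → ℝ)
    (hA : A = tmul (tmul U S) (tT V))
    (hU1 : tmul (tT U) U = tId n l) (hU2 : tmul U (tT U) = tId n l)
    (hV1 : tmul (tT V) V = tId n m) (hV2 : tmul V (tT V) = tId n m)
    (hS : ∀ (i : ZMod n) (a : Fin l) (b : Fin m),
      hatSlice S i a b = if (a : ℕ) = (b : ℕ) then (σ i (a : ℕ) : ℂ) else 0)
    (hσnonneg : ∀ i j, 0 ≤ σ i j)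
    (hσmono : ∀ i, ∀ j j' : ℕ, j ≤ j' → σ i j' ≤ σ i j) :
    ∀ (X : Fin l → Fin k → ZMod n → ℝ) (Y : Fin k → Fin m → ZMod n → ℝ),
      frob (fun i j t => A i j t -
          tmul (tmul U (fun a b t => if (a : ℕ) < k then S a b t else 0)) (tT V) i j t)
        ≤ frob (fun i j t => A i j t - tmul X Y i j t) :=
  tsvd_truncation_optimal_general k A U S V σ hA hU1 hV1 hS hσnonneg hσmono
end
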